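/- Let x be a skew-adjoint endomorphism of (V, B). The following are equivalent: (a) there exist c ∈ k and a nonzero isotropic vector v ∈ V_H with x v = c v; (b) there is a direct sum decomposition V = ⊕_{i∈ℤ} V_i into subspaces, all but finitely many zero, such that B(V_i, V_j) = 0 whenever i + j ≠ 0, e ∈ V_0, V_i ≠ 0 for some i ≠ 0, and x V_i ⊆ ⊕_{j ≥ i} V_j for every i. -/

import Mathlib

/-!
If `v ∈ V_H` is an isotropic eigenvector of `x`, complete it to a hyperbolic pair `(v, u)` with
`u ∈ V_H`. The operator `h z = B(u, z) v - B(v, z) u` is skew-adjoint, kills `e`, and acts by `1`,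
`-1`, `0` on `k v`, `k u`, `{u, v}^⊥`; its eigenspace grading is isotropic because `h` is
skew-adjoint, and `x` raises degrees because it preserves the line `k v` and its orthogonal `v^⊥`.

Conversely, nondegeneracy forces `V_d ≠ 0` for some `d > 0`, and then `⊕_{j ≥ d} V_j` is a nonzero,
totally isotropic, `x`-stable subspace of `V_H`: any eigenvector of `x` in it will do.
-/

open Module

theorem iSupIndep.eq_bot_of_biSup_eq_top {ι α : Type*} [CompleteLattice α] {W : ι → α}
    (hW : iSupIndep W) {s : Set ι} (hs : ⨆ j ∈ s, W j = ⊤) {i : ι} (hi : i ∉ s) : W i = ⊥ :=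
  (hW i).eq_bot_of_le <| calc
    W i ≤ ⨆ j ∈ s, W j := hs ▸ le_top
    _ ≤ ⨆ (j) (_ : j ≠ i), W j := biSup_mono fun _ hj => ne_of_mem_of_not_mem hj hi

theorem Submodule.map_iSup_ge_le {ι R M : Type*} [Preorder ι] [Semiring R] [AddCommMonoid M]
    [Module R M] {W : ι → Submodule R M} {f : M →ₗ[R] M}
    (hf : ∀ i, (W i).map f ≤ ⨆ j ≥ i, W j) (d : ι) :
    (⨆ j ≥ d, W j).map f ≤ ⨆ j ≥ d, W j :=
  Submodule.map_le_iff_le_comap.2 <| iSup₂_le fun j hj =>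
    Submodule.map_le_iff_le_comap.1 <| (hf j).trans <| biSup_mono fun _ hl => le_trans hj hl

theorem Submodule.exists_eigenvector_of_map_le {k V : Type*} [Field k] [IsAlgClosed k]
    [AddCommGroup V] [Module k V] [FiniteDimensional k V] {x : End k V} {U : Submodule k V}
    (hU : U ≠ ⊥) (hxU : U.map x ≤ U) : ∃ (c : k), ∃ v ∈ U, v ≠ 0 ∧ x v = c • v := by
  have : Nontrivial U := Submodule.nontrivial_iff_ne_bot.2 hU
  obtain ⟨c, hc⟩ := End.exists_eigenvalue (x.restrict fun v hv => hxU ⟨v, hv, rfl⟩)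
  obtain ⟨v, hv⟩ := hc.exists_hasEigenvector
  exact ⟨c, v, v.2, by simpa using hv.2, congrArg Subtype.val hv.apply_eq_smul⟩

namespace LinearMap.BilinForm

variable {k V : Type*} [Field k] [AddCommGroup V] [Module k V] (B : LinearMap.BilinForm k V)

theorem apply_eq_zero_of_mem_eigenspace {x : End k V} (hx : ∀ a b, B (x a) b = -B a (x b))
    {μ ν : k} (hμν : μ + ν ≠ 0) {a b : V} (ha : a ∈ x.eigenspace μ) (hb : b ∈ x.eigenspace ν) :
    B a b = 0 := by
  rw [End.mem_eigenspace_iff] at ha hb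
  have h := hx a b
  rw [ha, hb, map_smul, map_smul, smul_apply, smul_eq_mul, smul_eq_mul] at h
  exact (mul_eq_zero.1 (by linear_combination h : (μ + ν) * B a b = 0)).resolve_left hμν

variable {ι : Type*} {W : ι → Submodule k V} {s t : Set ι}

theorem apply_eq_zero_of_mem_biSup_right {a : V} (h : ∀ j ∈ t, ∀ b ∈ W j, B a b = 0) {b : V}
    (hb : b ∈ ⨆ j ∈ t, W j) : B a b = 0 :=
  (iSup₂_le fun j hj b hb => h j hj b hb : ⨆ j ∈ t, W j ≤ LinearMap.ker (B a)) hb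

theorem apply_eq_zero_of_mem_biSup (h : ∀ i ∈ s, ∀ j ∈ t, ∀ a ∈ W i, ∀ b ∈ W j, B a b = 0)
    {a b : V} (ha : a ∈ ⨆ i ∈ s, W i) (hb : b ∈ ⨆ j ∈ t, W j) : B a b = 0 :=
  B.flip.apply_eq_zero_of_mem_biSup_right
    (fun i hi a ha => B.apply_eq_zero_of_mem_biSup_right (h i hi · · a ha) hb) ha

variable {B} in
theorem Nondegenerate.grading_neg_ne_bot [AddGroup ι] (hB : B.Nondegenerate)
    (htop : ⨆ i, W i = ⊤) (horth : ∀ i j, i + j ≠ 0 → ∀ a ∈ W i, ∀ b ∈ W j, B a b = 0)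
    {i : ι} (hi : W i ≠ ⊥) : W (-i) ≠ ⊥ := by
  intro hbot
  refine hi (eq_bot_iff.2 fun a ha => hB.1 a fun b => ?_)
  refine (iSup_le fun j => ?_ : ⨆ j, W j ≤ LinearMap.ker (B a)) (htop ▸ Submodule.mem_top)
  by_cases hj : i + j = 0
  · rw [eq_neg_of_add_eq_zero_right hj, hbot]
    exact bot_le
  · exact fun b hb => horth i j hj a ha b hb

structure IsHyperbolicPair (v u : V) : Prop where
  isotropic_left : B v v = 0
  isotropic_right : B u u = 0
  apply_eq_one : B v u = 1

theorem exists_isHyperbolicPair [NeZero (2 : k)] (hB : ∀ a b, B a b = B b a)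
    (hnd : B.Nondegenerate) {e v : V} (he : B e e ≠ 0) (hv : v ≠ 0) (hvv : B v v = 0)
    (hev : B e v = 0) : ∃ u, B.IsHyperbolicPair v u ∧ B u e = 0 := by
  obtain ⟨w, hw⟩ : ∃ w, B v w ≠ 0 := by
    by_contra! h
    exact hv (hnd.1 v h)
  -- first move `w` into `e^⊥`, then correct it by a multiple of `v` to make it isotropic
  set w₁ := (B v w)⁻¹ • (w - (B e w / B e e) • e)
  have hvw₁ : B v w₁ = 1 := by
    simp [w₁, hB v e, hev, hw]
  have hw₁e : B w₁ e = 0 := by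
    simp [w₁, hB w e, he]
  refine ⟨w₁ - (B w₁ w₁ / 2) • v, ⟨hvv, ?_, ?_⟩, ?_⟩
  · simp [hvv, hvw₁, hB w₁ v]
    field_simp
    ring
  · simp [hvv, hvw₁]
  · simp [hw₁e, hB v e, hev]

variable (v u : V)

def hyperbolicGenerator : End k V := (B u).smulRight v - (B v).smulRight u

@[simp]
theorem hyperbolicGenerator_apply (z : V) :
    B.hyperbolicGenerator v u z = B u z • v - B v z • u := rfl

def hyperbolicGrading (i : ℤ) : Submodule k V := (B.hyperbolicGenerator v u).eigenspace (i : k)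

variable {B v u}

theorem hyperbolicGenerator_skew (hB : ∀ a b, B a b = B b a) (a b : V) :
    B (B.hyperbolicGenerator v u a) b = -B a (B.hyperbolicGenerator v u b) := by
  simp only [hyperbolicGenerator_apply, map_sub, map_smul, LinearMap.sub_apply,
    LinearMap.smul_apply, smul_eq_mul, hB a u, hB a v]
  ring

theorem mem_hyperbolicGrading_zero {z : V} (hu : B u z = 0) (hv : B v z = 0) :
    z ∈ B.hyperbolicGrading v u 0 := by
  simp [hyperbolicGrading, hu, hv]

theorem mem_hyperbolicGrading_one (hB : ∀ a b, B a b = B b a) (hp : B.IsHyperbolicPair v u) :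
    v ∈ B.hyperbolicGrading v u 1 := by
  simp [hyperbolicGrading, hB u v, hp.isotropic_left, hp.apply_eq_one]

theorem mem_hyperbolicGrading_neg_one (hp : B.IsHyperbolicPair v u) :
    u ∈ B.hyperbolicGrading v u (-1) := by
  simp [hyperbolicGrading, hp.isotropic_right, hp.apply_eq_one]

theorem sub_mem_hyperbolicGrading_zero (hB : ∀ a b, B a b = B b a)
    (hp : B.IsHyperbolicPair v u) (z : V) :
    z - B v z • u - B u z • v ∈ B.hyperbolicGrading v u 0 := by
  simp only [hyperbolicGrading, Int.cast_zero, End.mem_eigenspace_iff, zero_smul,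
    hyperbolicGenerator_apply, map_sub, map_smul, hB u v, hp.isotropic_left,
    hp.isotropic_right, hp.apply_eq_one]
  module

theorem biSup_Icc_hyperbolicGrading (hB : ∀ a b, B a b = B b a)
    (hp : B.IsHyperbolicPair v u) :
    ⨆ i ∈ Set.Icc (-1 : ℤ) 1, B.hyperbolicGrading v u i = ⊤ := by
  refine eq_top_iff.2 fun z _ => ?_
  have mem {i : ℤ} (hi : i ∈ Set.Icc (-1) 1) {y : V} (hy : y ∈ B.hyperbolicGrading v u i) :
      y ∈ ⨆ i ∈ Set.Icc (-1 : ℤ) 1, B.hyperbolicGrading v u i :=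
    le_iSup₂ (f := fun i (_ : i ∈ Set.Icc (-1 : ℤ) 1) => B.hyperbolicGrading v u i) i hi hy
  rw [show z = B v z • u + (z - B v z • u - B u z • v) + B u z • v by abel]
  exact add_mem (add_mem
    (mem (i := -1) (by norm_num) (Submodule.smul_mem _ _ (mem_hyperbolicGrading_neg_one hp)))
    (mem (i := 0) (by norm_num) (sub_mem_hyperbolicGrading_zero hB hp z)))
    (mem (i := 1) (by norm_num) (Submodule.smul_mem _ _ (mem_hyperbolicGrading_one hB hp)))

theorem iSupIndep_hyperbolicGrading [CharZero k] : iSupIndep (B.hyperbolicGrading v u) :=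
  (B.hyperbolicGenerator v u).eigenspaces_iSupIndep.comp Int.cast_injective

theorem isInternal_hyperbolicGrading [CharZero k] (hB : ∀ a b, B a b = B b a)
    (hp : B.IsHyperbolicPair v u) : DirectSum.IsInternal (B.hyperbolicGrading v u) :=
  (DirectSum.isInternal_submodule_iff_iSupIndep_and_iSup_eq_top _).2
    ⟨iSupIndep_hyperbolicGrading, eq_top_iff.2 <|
      (biSup_Icc_hyperbolicGrading hB hp).symm.le.trans (iSup₂_le fun i _ => le_iSup _ i)⟩

theorem hyperbolicGrading_eq_bot [CharZero k] (hB : ∀ a b, B a b = B b a)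
    (hp : B.IsHyperbolicPair v u) {i : ℤ} (hi : i ∉ Set.Icc (-1) 1) :
    B.hyperbolicGrading v u i = ⊥ :=
  iSupIndep_hyperbolicGrading.eq_bot_of_biSup_eq_top (biSup_Icc_hyperbolicGrading hB hp) hi

theorem hyperbolicGrading_apply_eq_zero [CharZero k] (hB : ∀ a b, B a b = B b a) {i j : ℤ}
    (hij : i + j ≠ 0) {a b : V} (ha : a ∈ B.hyperbolicGrading v u i)
    (hb : b ∈ B.hyperbolicGrading v u j) : B a b = 0 :=
  B.apply_eq_zero_of_mem_eigenspace (hyperbolicGenerator_skew hB) (by exact_mod_cast hij) ha hb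

theorem hyperbolicGrading_one_le_span [CharZero k] (hB : ∀ a b, B a b = B b a)
    (hp : B.IsHyperbolicPair v u) : B.hyperbolicGrading v u 1 ≤ Submodule.span k {v} := by
  intro z hz
  have hvz : B v z = 0 :=
    hyperbolicGrading_apply_eq_zero hB (by norm_num) (mem_hyperbolicGrading_one hB hp) hz
  have hz' := End.mem_eigenspace_iff.1 hz
  rw [hyperbolicGenerator_apply, hvz, zero_smul, sub_zero, Int.cast_one, one_smul] at hz'
  exact Submodule.mem_span_singleton.2 ⟨B u z, hz'⟩

theorem mem_biSup_hyperbolicGrading_of_apply_eq_zero (hB : ∀ a b, B a b = B b a)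
    (hp : B.IsHyperbolicPair v u) {z : V} (hz : B v z = 0) :
    z ∈ ⨆ j ≥ 0, B.hyperbolicGrading v u j := by
  have mem {j : ℤ} (hj : j ≥ 0) {y : V} (hy : y ∈ B.hyperbolicGrading v u j) :
      y ∈ ⨆ j ≥ 0, B.hyperbolicGrading v u j :=
    le_iSup₂ (f := fun j (_ : j ≥ 0) => B.hyperbolicGrading v u j) j hj hy
  have h0 := sub_mem_hyperbolicGrading_zero hB hp z
  rw [hz, zero_smul, sub_zero] at h0
  rw [show z = (z - B u z • v) + B u z • v by abel]
  exact add_mem (mem le_rfl h0) (mem zero_le_one (Submodule.smul_mem _ _ <|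
    mem_hyperbolicGrading_one hB hp))

theorem map_hyperbolicGrading_le [CharZero k] (hB : ∀ a b, B a b = B b a)
    (hp : B.IsHyperbolicPair v u) {x : End k V} (hx : ∀ a b, B (x a) b = -B a (x b)) {c : k}
    (hxv : x v = c • v) (i : ℤ) :
    (B.hyperbolicGrading v u i).map x ≤ ⨆ j ≥ i, B.hyperbolicGrading v u j := by
  obtain hi | rfl | rfl | hi : i ≤ -1 ∨ i = 0 ∨ i = 1 ∨ 2 ≤ i := by omega
  · refine le_top.trans <| (biSup_Icc_hyperbolicGrading hB hp).symm.le.trans <|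
      biSup_mono fun j hj => ?_
    exact hi.trans hj.1
  · rintro _ ⟨z, hz, rfl⟩
    have hvz : B v z = 0 :=
      hyperbolicGrading_apply_eq_zero hB (by norm_num) (mem_hyperbolicGrading_one hB hp) hz
    have h := hx v z
    rw [hxv, map_smul, LinearMap.smul_apply, hvz, smul_zero, eq_comm, neg_eq_zero] at h
    exact mem_biSup_hyperbolicGrading_of_apply_eq_zero hB hp h
  · rintro _ ⟨z, hz, rfl⟩
    obtain ⟨a, rfl⟩ := Submodule.mem_span_singleton.1 (hyperbolicGrading_one_le_span hB hp hz)
    refine le_iSup₂ (f := fun j (_ : j ≥ 1) => B.hyperbolicGrading v u j) 1 le_rfl ?_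
    rw [map_smul, hxv]
    exact Submodule.smul_mem _ _ (Submodule.smul_mem _ _ (mem_hyperbolicGrading_one hB hp))
  · rw [hyperbolicGrading_eq_bot hB hp (by simp; omega), Submodule.map_bot]
    exact bot_le

end LinearMap.BilinForm

theorem statement7 (k V : Type*) [Field k] [IsAlgClosed k] [CharZero k]
    [AddCommGroup V] [Module k V] [FiniteDimensional k V]
    (B : LinearMap.BilinForm k V)
    (hsymm : ∀ u v : V, B u v = B v u)
    (hnd : LinearMap.BilinForm.Nondegenerate B)
    (e : V) (he : B e e ≠ 0)
    (x : Module.End k V)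
    (hskew : ∀ u v : V, B (x u) v = - B u (x v)) :
    (∃ (c : k) (v : V), v ∈ LinearMap.ker (B e) ∧ v ≠ 0 ∧ B v v = 0 ∧ x v = c • v) ↔
      (∃ W : ℤ → Submodule k V,
        DirectSum.IsInternal W ∧
        {i : ℤ | W i ≠ ⊥}.Finite ∧
        (∀ i j : ℤ, i + j ≠ 0 → ∀ u ∈ W i, ∀ v ∈ W j, B u v = 0) ∧
        e ∈ W 0 ∧
        (∃ i : ℤ, i ≠ 0 ∧ W i ≠ ⊥) ∧
        (∀ i : ℤ, (W i).map (x : V →ₗ[k] V) ≤ ⨆ j ≥ i, W j)) := by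
  open LinearMap.BilinForm in
  constructor
  · rintro ⟨c, v, hev, hv0, hvv, hxv⟩
    obtain ⟨u, hp, hue⟩ := exists_isHyperbolicPair B hsymm hnd he hv0 hvv hev
    refine ⟨B.hyperbolicGrading v u, isInternal_hyperbolicGrading hsymm hp,
      (Set.finite_Icc (-1) 1).subset fun i hi => by_contra fun h =>
        hi (hyperbolicGrading_eq_bot hsymm hp h),
      fun i j hij a ha b hb => hyperbolicGrading_apply_eq_zero hsymm hij ha hb,
      mem_hyperbolicGrading_zero hue ((hsymm v e).trans hev),
      ⟨1, one_ne_zero, (Submodule.ne_bot_iff _).2 ⟨v, mem_hyperbolicGrading_one hsymm hp, hv0⟩⟩,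
      map_hyperbolicGrading_le hsymm hp hskew hxv⟩
  · rintro ⟨W, hW, -, horth, heW, ⟨i, hi0, hi⟩, hx⟩
    obtain ⟨d, hd, hWd⟩ : ∃ d > 0, W d ≠ ⊥ := by
      rcases hi0.lt_or_gt with hneg | hpos
      · exact ⟨-i, neg_pos.2 hneg, hnd.grading_neg_ne_bot hW.submodule_iSup_eq_top horth hi⟩
      · exact ⟨i, hpos, hi⟩
    have hU : ⨆ j ≥ d, W j ≠ ⊥ :=
      ne_bot_of_le_ne_bot hWd (le_iSup₂ (f := fun j (_ : j ≥ d) => W j) d le_rfl)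
    obtain ⟨c, v, hvU, hv0, hxv⟩ :=
      Submodule.exists_eigenvector_of_map_le hU (Submodule.map_iSup_ge_le hx d)
    refine ⟨c, v, ?_, hv0, ?_, hxv⟩
    · exact B.apply_eq_zero_of_mem_biSup_right
        (fun j (hj : j ≥ d) => horth 0 j (by omega) e heW) hvU
    · exact B.apply_eq_zero_of_mem_biSup
        (fun i (hi : i ≥ d) j (hj : j ≥ d) => horth i j (by omega)) hvU hvU
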